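/- Fix indices i, j with 1 ≤ i ≤ q, 1 ≤ j ≤ p, and let F(s) = D(W, A, S') where S' agrees with S except that its (i,j) entry is replaced by s. Then F is twice differentiable and its second derivative is constant, equal to 2·(Aᵀ·Wᵀ·W·A)_{ii} at every s ∈ ℝ. -/

import Mathlib

open Matrix

/-- The GBR-NMF objective `D(W,A,S) = ‖X − W·A·S‖_F² = Tr((X − WAS)(X − WAS)ᵀ)`. -/
noncomputable def objD {n p q : ℕ} (X : Matrix (Fin n) (Fin p) ℝ)
    (W : Matrix (Fin n) (Fin q) ℝ) (A : Matrix (Fin q) (Fin q) ℝ)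
    (S : Matrix (Fin q) (Fin p) ℝ) : ℝ :=
  Matrix.trace ((X - W * A * S) * (X - W * A * S)ᵀ)

/-- The matrix agreeing with `M` except that its `(i,j)` entry is replaced by `w`. -/
def updEntry {m k : ℕ} (M : Matrix (Fin m) (Fin k) ℝ) (i : Fin m) (j : Fin k) (w : ℝ) :
    Matrix (Fin m) (Fin k) ℝ :=
  fun a b => if a = i ∧ b = j then w else M a b

/-!
Along the line `s ↦ S + (s - S i j) • E`, with `E` the matrix unit at `(i, j)`, the residual
`X - W A S` is affine in `s`, so `F` is a quadratic polynomial in `s - S i j`. Its leading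
coefficient is `‖W A E‖_F² = ‖(W A) e_i‖² = (Aᵀ Wᵀ W A)_{ii}`, which is half the second derivative.
-/

theorem updEntry_eq_add_smul_single {m k : ℕ} (M : Matrix (Fin m) (Fin k) ℝ) (i : Fin m)
    (j : Fin k) (w : ℝ) : updEntry M i j w = M + (w - M i j) • single i j 1 := by
  ext a b
  by_cases h : a = i ∧ b = j
  · obtain ⟨rfl, rfl⟩ := h
    simp [updEntry]
  · simp [updEntry, h, eq_comm (a := i), eq_comm (a := j)]

section Trace

variable {l m n R : Type*} [Fintype l] [Fintype m] [Fintype n] [CommRing R]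

theorem trace_sub_smul_mul_transpose_sub_smul (M N : Matrix m n R) (t : R) :
    trace ((M - t • N) * (M - t • N)ᵀ) =
      trace (N * Nᵀ) * t ^ 2 - 2 * trace (M * Nᵀ) * t + trace (M * Mᵀ) := by
  have h : trace (N * Mᵀ) = trace (M * Nᵀ) := by
    rw [← trace_transpose, transpose_mul, transpose_transpose]
  simp only [Matrix.sub_mul, Matrix.mul_sub, transpose_sub, transpose_smul, Matrix.smul_mul,
    Matrix.mul_smul, trace_sub, trace_smul, smul_eq_mul, h]
  ring

theorem trace_mul_single_mul_transpose [DecidableEq l] [DecidableEq n]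
    (B : Matrix m n R) (i : n) (j : l) :
    trace (B * single i j (1 : R) * (B * single i j (1 : R))ᵀ) = (Bᵀ * B) i i := by
  rw [transpose_mul, transpose_single, trace_mul_comm, Matrix.mul_assoc, trace_single_mul,
    ← Matrix.mul_assoc, mul_single_apply_same, mul_one, one_smul]

end Trace

theorem objD_updEntry {n p q : ℕ} (X : Matrix (Fin n) (Fin p) ℝ) (W : Matrix (Fin n) (Fin q) ℝ)
    (A : Matrix (Fin q) (Fin q) ℝ) (S : Matrix (Fin q) (Fin p) ℝ) (i : Fin q) (j : Fin p)
    (s : ℝ) :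
    objD X W A (updEntry S i j s) =
      (Aᵀ * Wᵀ * W * A) i i * (s - S i j) ^ 2
        - 2 * trace ((X - W * A * S) * (W * A * single i j (1 : ℝ))ᵀ) * (s - S i j)
        + objD X W A S := by
  have hres : X - W * A * updEntry S i j s
      = (X - W * A * S) - (s - S i j) • (W * A * single i j (1 : ℝ)) := by
    rw [updEntry_eq_add_smul_single, Matrix.mul_add, Matrix.mul_smul]
    abel
  have hgram : Aᵀ * Wᵀ * W * A = (W * A)ᵀ * (W * A) := by
    simp only [transpose_mul, Matrix.mul_assoc]
  rw [objD, hres, trace_sub_smul_mul_transpose_sub_smul, trace_mul_single_mul_transpose, hgram,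
    objD]

theorem hasDerivAt_shifted_quadratic (a b c d s : ℝ) :
    HasDerivAt (fun s => a * (s - d) ^ 2 - b * (s - d) + c) (2 * a * (s - d) - b) s := by
  have hlin : HasDerivAt (fun s : ℝ => s - d) 1 s := (hasDerivAt_id s).sub_const d
  exact (((hlin.fun_pow 2).const_mul a).sub (hlin.const_mul b)).add_const c
    |>.congr_deriv (by ring)

theorem hasDerivAt_deriv_shifted_quadratic (a b c d s : ℝ) :
    HasDerivAt (deriv fun s => a * (s - d) ^ 2 - b * (s - d) + c) (2 * a) s := by
  have hderiv : deriv (fun s => a * (s - d) ^ 2 - b * (s - d) + c)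
      = fun s => 2 * a * (s - d) - b :=
    funext fun s => (hasDerivAt_shifted_quadratic a b c d s).deriv
  rw [hderiv]
  simpa using ((hasDerivAt_id s).sub_const d).const_mul (2 * a) |>.sub_const b

/-- With `F(s) = D(W, A, S')` where `S'` is `S` with entry `(i,j)` replaced by `s`,
`F` is twice differentiable and its second derivative is constantly
`2·(Aᵀ·Wᵀ·W·A)_{ii}`. -/
theorem second_deriv_objD_entry_S
    (n p q : ℕ)
    (X : Matrix (Fin n) (Fin p) ℝ) (W : Matrix (Fin n) (Fin q) ℝ)
    (A : Matrix (Fin q) (Fin q) ℝ) (S : Matrix (Fin q) (Fin p) ℝ)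
    (i : Fin q) (j : Fin p) :
    (∀ s : ℝ, DifferentiableAt ℝ (fun s => objD X W A (updEntry S i j s)) s) ∧
    (∀ s : ℝ,
      HasDerivAt (deriv (fun s => objD X W A (updEntry S i j s)))
        (2 * (Aᵀ * Wᵀ * W * A) i i) s) := by
  simp only [objD_updEntry]
  exact ⟨fun s => (hasDerivAt_shifted_quadratic _ _ _ _ s).differentiableAt,
    hasDerivAt_deriv_shifted_quadratic _ _ _ _⟩
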